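/- arXiv:1311.2367 — 2 statements merged into one kernel-verified Lean document; each statement's English description precedes it below -/
import Mathlib

section
/- For every x ∈ E and every integer n ≥ 3, the class 𝓕_{n−1}(x) is contained in 𝓕_n(x); moreover the inclusion is strict: for x̄ = (0,0) ∈ ℝ², the function f(x₁,x₂) = |x₁|ⁿ + |x₂|ⁿ belongs to 𝓕_n(x̄) but not to 𝓕_{n−1}(x̄). -/
/-!
If `f (x + t u') ≥ f x + α t^{k+1}` for small `t > 0` and `u'` near `u`, then the lower derivative
`d₋^{k+1} f(x; 0, …, 0; u)` is at least `(k+1)! α > 0` when `f x` is finite, and is `±∞` when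
`f x = -∞` (then every difference quotient is `±∞`); in no case does it vanish. So membership in
`𝓕_{k+1}(x)` makes the hypotheses of `𝓕_{k+2}(x)`, which include `d₋^{k+1} f(x; 0, …, 0; u) = 0`,
unsatisfiable.

For the example, `φ = |x₁|ⁿ + |x₂|ⁿ` is continuous, positively `n`-homogeneous and positive on the
unit circle. Homogeneity and a positive lower bound of `φ` near `u` give growth of order `n`, and
they also make every difference quotient of order `k + 1 < n` equal to `(k+1)! tⁿ⁻ᵏ⁻¹ φ(u') → 0`.
In particular `d₋^{n-1} φ(0; 0, …, 0; u) = 0`, which by the first paragraph excludes `φ ∈ 𝓕_{n-1}(0)`.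
-/

open Filter Topology

/-- The space of continuous `m`-linear forms `L^m(E)`. -/
abbrev MForm (E : Type*) [NormedAddCommGroup E] [InnerProductSpace ℝ E] (m : ℕ) : Type _ :=
  ContinuousMultilinearMap ℝ (fun _ : Fin m => E) ℝ

/-- A tuple of multilinear forms `(x₁*, …, x_k*)`, where `x_i*` is an `i`-linear form. -/
abbrev FormTuple (E : Type*) [NormedAddCommGroup E] [InnerProductSpace ℝ E] (k : ℕ) : Type _ :=
  ∀ i : Fin k, MForm E (i.1 + 1)

/-- Restriction of a tuple of forms to its first `m` entries. -/
def FormTuple.restrict {E : Type*} [NormedAddCommGroup E] [InnerProductSpace ℝ E] {k : ℕ}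
    (xs : FormTuple E k) (m : ℕ) (h : m ≤ k) : FormTuple E m :=
  fun j => xs ⟨j.1, lt_of_lt_of_le j.2 h⟩

/-- The lower Hadamard directional derivative of order `k + 1` of `f` at `x`
with parameters `xs = (x₁*, …, x_k*)` in direction `u`:
`liminf_{t↓0, u'→u} (k+1)!/t^(k+1) * (f (x + t u') - f x - ∑_{i=1}^{k} t^i/i! · x_i*(u',…,u'))`. -/
noncomputable def hadamardDeriv {E : Type*} [NormedAddCommGroup E] [InnerProductSpace ℝ E]
    (f : E → EReal) (x : E) (k : ℕ) (xs : FormTuple E k) (u : E) : EReal :=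
  Filter.liminf
    (fun p : ℝ × E =>
      (((Nat.factorial (k + 1) : ℝ) / p.1 ^ (k + 1) : ℝ) : EReal) *
        (f (x + p.1 • p.2) - f x -
          ((∑ i : Fin k, p.1 ^ (i.1 + 1) / (Nat.factorial (i.1 + 1)) * xs i (fun _ => p.2) : ℝ) :
            EReal)))
    ((𝓝[>] (0 : ℝ)) ×ˢ 𝓝 u)

/-- The lower Hadamard subdifferential of order `k + 1` of `f` at `x`
with parameters `xs = (x₁*, …, x_k*)`. -/
def hadamardSubdiff {E : Type*} [NormedAddCommGroup E] [InnerProductSpace ℝ E]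
    (f : E → EReal) (x : E) (k : ℕ) (xs : FormTuple E k) : Set (MForm E (k + 1)) :=
  {y | ∀ u : E, ((y (fun _ => u) : ℝ) : EReal) ≤ hadamardDeriv f x k xs u}

/-- `f` belongs to the class `𝓕_n (xbar)`: `xbar ∈ dom f` and for every unit vector `u`
such that `0 ∈ ∂₋ⁱ f (xbar; 0, …, 0)` for `i = 1, …, n - 2` and
`d₋ⁱ f (xbar; 0, …, 0; u) = 0` for `i = 1, …, n - 1`, there are `ε, δ, α > 0` with
`f (xbar + t u') ≥ f xbar + α tⁿ` whenever `0 ≤ t < δ` and `‖u' - u‖ < ε`. -/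
def MemClassF {E : Type*} [NormedAddCommGroup E] [InnerProductSpace ℝ E]
    (f : E → EReal) (n : ℕ) (xbar : E) : Prop :=
  f xbar ≠ ⊤ ∧ ∀ u : E, ‖u‖ = 1 →
    (∀ j : ℕ, j + 3 ≤ n → (0 : MForm E (j + 1)) ∈ hadamardSubdiff f xbar j (fun _ => 0)) →
    (∀ j : ℕ, j + 2 ≤ n → hadamardDeriv f xbar j (fun _ => 0) u = 0) →
    ∃ ε > (0 : ℝ), ∃ δ > (0 : ℝ), ∃ α > (0 : ℝ), ∀ t : ℝ, ∀ u' : E,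
      0 ≤ t → t < δ → ‖u' - u‖ < ε →
      f xbar + ((α * t ^ n : ℝ) : EReal) ≤ f (xbar + t • u')

/-- The function `g (x₁, x₂) = |x₁|ⁿ + |x₂|ⁿ` as an extended real valued function. -/
noncomputable def gEx18 (n : ℕ) : EuclideanSpace ℝ (Fin 2) → EReal := fun x =>
  ((|x 0| ^ n + |x 1| ^ n : ℝ) : EReal)

lemma liminf_eq_bot_or_top {α : Type*} {L : Filter α} {g : α → EReal}
    (h : ∀ᶠ a in L, g a = ⊥ ∨ g a = ⊤) : liminf g L = ⊥ ∨ liminf g L = ⊤ := by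
  by_cases htop : ∀ᶠ a in L, g a = ⊤
  · exact .inr (eq_top_iff.2 (le_liminf_of_le (by isBoundedDefault) (htop.mono fun _ h => h.ge)))
  · refine .inl (eq_bot_iff.2 (liminf_le_of_frequently_le ?_))
    refine ((not_eventually.1 htop).and_eventually h).mono ?_
    rintro a ⟨hne, hbot | htop⟩
    exacts [hbot.le, absurd htop hne]

lemma eventually_fst_pos {X : Type*} [TopologicalSpace X] (u : X) :
    ∀ᶠ p : ℝ × X in 𝓝[>] (0 : ℝ) ×ˢ 𝓝 u, 0 < p.1 :=
  Eventually.prod_inl self_mem_nhdsWithin _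

section HadamardDeriv

variable {E : Type*} [NormedAddCommGroup E] [InnerProductSpace ℝ E]

lemma hadamardDeriv_zero_forms (f : E → EReal) (x : E) (k : ℕ) (u : E) :
    hadamardDeriv f x k (fun _ => 0) u =
      liminf (fun p : ℝ × E =>
          (((k + 1).factorial / p.1 ^ (k + 1) : ℝ) : EReal) * (f (x + p.1 • p.2) - f x))
        (𝓝[>] (0 : ℝ) ×ˢ 𝓝 u) := by
  simp [hadamardDeriv]

lemma hadamardDeriv_eq_bot_or_top {f : E → EReal} {x : E} (hx : f x = ⊥) (k : ℕ) (u : E) :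
    hadamardDeriv f x k (fun _ => 0) u = ⊥ ∨ hadamardDeriv f x k (fun _ => 0) u = ⊤ := by
  rw [hadamardDeriv_zero_forms]
  refine liminf_eq_bot_or_top ((eventually_fst_pos u).mono fun p hp => ?_)
  have hc : (0 : ℝ) < (k + 1).factorial / p.1 ^ (k + 1) := by positivity
  rw [hx]
  by_cases hy : f (x + p.1 • p.2) = ⊥
  · rw [hy, EReal.bot_sub]
    exact .inl (EReal.coe_mul_bot_of_pos hc)
  · rw [EReal.sub_bot hy]
    exact .inr (EReal.coe_mul_top_of_pos hc)

lemma le_hadamardDeriv_of_growth {f : E → EReal} {x u : E} {k : ℕ} {r α : ℝ} (hx : f x = r)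
    (hgrowth : ∀ᶠ p : ℝ × E in 𝓝[>] (0 : ℝ) ×ˢ 𝓝 u,
      f x + ((α * p.1 ^ (k + 1) : ℝ) : EReal) ≤ f (x + p.1 • p.2)) :
    (((k + 1).factorial * α : ℝ) : EReal) ≤ hadamardDeriv f x k (fun _ => 0) u := by
  rw [hadamardDeriv_zero_forms]
  refine le_liminf_of_le (by isBoundedDefault) ?_
  filter_upwards [hgrowth, eventually_fst_pos u] with p hp ht
  have hc : (0 : ℝ) ≤ (k + 1).factorial / p.1 ^ (k + 1) := by positivity
  have hdiff : ((α * p.1 ^ (k + 1) : ℝ) : EReal) ≤ f (x + p.1 • p.2) - f x := by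
    rw [hx] at hp ⊢
    rw [EReal.le_sub_iff_add_le (.inl (EReal.coe_ne_bot _)) (.inl (EReal.coe_ne_top _)), add_comm]
    exact hp
  calc (((k + 1).factorial * α : ℝ) : EReal)
      = (((k + 1).factorial / p.1 ^ (k + 1) : ℝ) : EReal) * ((α * p.1 ^ (k + 1) : ℝ) : EReal) := by
        rw [← EReal.coe_mul]
        field_simp
    _ ≤ _ := mul_le_mul_of_nonneg_left hdiff (EReal.coe_nonneg.2 hc)

lemma hadamardDeriv_ne_zero_of_growth {f : E → EReal} {x u : E} {k : ℕ} {α : ℝ}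
    (hx : f x ≠ ⊤) (hα : 0 < α)
    (hgrowth : ∀ᶠ p : ℝ × E in 𝓝[>] (0 : ℝ) ×ˢ 𝓝 u,
      f x + ((α * p.1 ^ (k + 1) : ℝ) : EReal) ≤ f (x + p.1 • p.2)) :
    hadamardDeriv f x k (fun _ => 0) u ≠ 0 := by
  by_cases hbot : f x = ⊥
  · rcases hadamardDeriv_eq_bot_or_top hbot k u with h | h <;> simp [h]
  · intro h0
    have hle := le_hadamardDeriv_of_growth (EReal.coe_toReal hx hbot).symm hgrowth
    rw [h0, ← EReal.coe_zero, EReal.coe_le_coe_iff] at hle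
    have : (0 : ℝ) < (k + 1).factorial * α := by positivity
    linarith

lemma MemClassF.hadamardDeriv_ne_zero {f : E → EReal} {x : E} {k : ℕ}
    (hf : MemClassF f (k + 1) x) {u : E} (hu : ‖u‖ = 1)
    (hsub : ∀ j : ℕ, j + 3 ≤ k + 1 → (0 : MForm E (j + 1)) ∈ hadamardSubdiff f x j (fun _ => 0))
    (hder : ∀ j : ℕ, j + 2 ≤ k + 1 → hadamardDeriv f x j (fun _ => 0) u = 0) :
    hadamardDeriv f x k (fun _ => 0) u ≠ 0 := by
  obtain ⟨ε, hε, δ, hδ, α, hα, hgrowth⟩ := hf.2 u hu hsub hder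
  refine hadamardDeriv_ne_zero_of_growth hf.1 hα ?_
  have ht : ∀ᶠ t : ℝ in 𝓝[>] 0, t < δ := nhdsWithin_le_nhds (gt_mem_nhds hδ)
  have hv : ∀ᶠ v in 𝓝 u, ‖v - u‖ < ε := (tendsto_norm_sub_self u).eventually (gt_mem_nhds hε)
  filter_upwards [ht.prod_mk hv, eventually_fst_pos u] with p ⟨htδ, hvu⟩ ht0
  exact hgrowth p.1 p.2 ht0.le htδ hvu

theorem MemClassF.succ {f : E → EReal} {x : E} {k : ℕ} (hf : MemClassF f (k + 1) x) :
    MemClassF f (k + 2) x := by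
  refine ⟨hf.1, fun u hu hsub hder => ?_⟩
  exact absurd (hder k le_rfl) <| hf.hadamardDeriv_ne_zero hu
    (fun j hj => hsub j (by omega)) (fun j hj => hder j (by omega))

end HadamardDeriv

section Homogeneous

variable {E : Type*} [NormedAddCommGroup E] [InnerProductSpace ℝ E] {n : ℕ} {φ : E → ℝ}

lemma map_zero_of_homogeneous (hφ : ∀ t : ℝ, 0 ≤ t → ∀ v, φ (t • v) = t ^ n * φ v) (hn : n ≠ 0) :
    φ 0 = 0 := by
  simpa [zero_pow hn] using hφ 0 le_rfl 0

lemma hadamardDeriv_of_homogeneous (hcont : Continuous φ)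
    (hφ : ∀ t : ℝ, 0 ≤ t → ∀ v, φ (t • v) = t ^ n * φ v) {k : ℕ} (hk : k + 1 < n) (u : E) :
    hadamardDeriv (fun v => (φ v : EReal)) 0 k (fun _ => 0) u = 0 := by
  rw [hadamardDeriv_zero_forms]
  set g : ℝ × E → ℝ := fun p => (k + 1).factorial * p.1 ^ (n - (k + 1)) * φ p.2
  have heq : ∀ᶠ p : ℝ × E in 𝓝[>] (0 : ℝ) ×ˢ 𝓝 u,
      (((k + 1).factorial / p.1 ^ (k + 1) : ℝ) : EReal) * ((φ (0 + p.1 • p.2) : ℝ) - (φ 0 : ℝ)) =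
        (g p : EReal) := by
    filter_upwards [eventually_fst_pos u] with p hp
    have hpow : p.1 ^ n = p.1 ^ (k + 1) * p.1 ^ (n - (k + 1)) := by
      rw [← pow_add, Nat.add_sub_cancel' hk.le]
    rw [zero_add, hφ _ hp.le, map_zero_of_homogeneous hφ (by omega), ← EReal.coe_sub,
      ← EReal.coe_mul, sub_zero, hpow]
    congr 1
    simp only [g]
    field_simp
  rw [liminf_congr heq]
  have hg : Tendsto g (𝓝[>] (0 : ℝ) ×ˢ 𝓝 u) (𝓝 0) := by
    have := (show Continuous g by fun_prop).tendsto (0, u)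
    rw [show g (0, u) = 0 by simp [g, zero_pow (by omega : n - (k + 1) ≠ 0)]] at this
    exact this.mono_left (by rw [nhds_prod_eq]; exact prod_mono nhdsWithin_le_nhds le_rfl)
  exact ((continuous_coe_real_ereal.tendsto 0).comp hg).liminf_eq

lemma memClassF_of_homogeneous (hcont : Continuous φ)
    (hφ : ∀ t : ℝ, 0 ≤ t → ∀ v, φ (t • v) = t ^ n * φ v) (hpos : ∀ u, ‖u‖ = 1 → 0 < φ u)
    (hn : n ≠ 0) : MemClassF (fun v => (φ v : EReal)) n 0 := by
  refine ⟨EReal.coe_ne_top _, fun u hu _ _ => ?_⟩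
  obtain ⟨ε, hε, hball⟩ := Metric.eventually_nhds_iff.1
    (hcont.continuousAt.eventually (lt_mem_nhds (half_lt_self (hpos u hu))))
  refine ⟨ε, hε, 1, one_pos, φ u / 2, half_pos (hpos u hu), fun t u' ht _ hu' => ?_⟩
  dsimp only
  rw [zero_add, hφ t ht, map_zero_of_homogeneous hφ hn, ← EReal.coe_add, EReal.coe_le_coe_iff,
    zero_add, mul_comm]
  exact mul_le_mul_of_nonneg_left (hball (by rwa [dist_eq_norm])).le (pow_nonneg ht n)

end Homogeneous

lemma continuous_abs_pow_add_abs_pow (n : ℕ) :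
    Continuous fun v : EuclideanSpace ℝ (Fin 2) => |v 0| ^ n + |v 1| ^ n := by
  fun_prop

lemma abs_pow_add_abs_pow_smul (n : ℕ) {t : ℝ} (ht : 0 ≤ t) (v : EuclideanSpace ℝ (Fin 2)) :
    |(t • v) 0| ^ n + |(t • v) 1| ^ n = t ^ n * (|v 0| ^ n + |v 1| ^ n) := by
  simp only [PiLp.smul_apply, smul_eq_mul, abs_mul, abs_of_nonneg ht, mul_pow, mul_add]

lemma abs_pow_add_abs_pow_pos (n : ℕ) {v : EuclideanSpace ℝ (Fin 2)} (hv : v ≠ 0) :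
    0 < |v 0| ^ n + |v 1| ^ n := by
  obtain ⟨i, hi⟩ : ∃ i, v i ≠ 0 := by
    by_contra! h
    exact hv (PiLp.ext h)
  have hi' : 0 < |v i| ^ n := pow_pos (abs_pos.2 hi) n
  fin_cases i <;> simp only at hi' <;> positivity

lemma memClassF_gEx18 {n : ℕ} (hn : n ≠ 0) : MemClassF (gEx18 n) n 0 :=
  memClassF_of_homogeneous (continuous_abs_pow_add_abs_pow n)
    (fun _ ht v => abs_pow_add_abs_pow_smul n ht v)
    (fun _ hu => abs_pow_add_abs_pow_pos n (by rintro rfl; simp at hu)) hn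

lemma hadamardDeriv_gEx18 {n k : ℕ} (hk : k + 1 < n) (u : EuclideanSpace ℝ (Fin 2)) :
    hadamardDeriv (gEx18 n) 0 k (fun _ => 0) u = 0 :=
  hadamardDeriv_of_homogeneous (continuous_abs_pow_add_abs_pow n)
    (fun _ ht v => abs_pow_add_abs_pow_smul n ht v) hk u

lemma not_memClassF_gEx18 (k : ℕ) : ¬ MemClassF (gEx18 (k + 2)) (k + 1) 0 := by
  intro hf
  refine hf.hadamardDeriv_ne_zero (u := EuclideanSpace.single 0 1) (by simp)
    (fun j hj v => ?_) (fun j hj => hadamardDeriv_gEx18 (by omega) _)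
    (hadamardDeriv_gEx18 (by omega) _)
  rw [hadamardDeriv_gEx18 (by omega)]
  simp

/-- for every `n ≥ 3` and every point `x`, the class `𝓕_(n-1) (x)` is
contained in `𝓕_n (x)`, and the inclusion is strict: `gEx18 n` belongs to `𝓕_n (0)` but
not to `𝓕_(n-1) (0)`. -/
theorem stmt_18 (n : ℕ) (hn : 3 ≤ n) :
    (∀ (F : Type) [NormedAddCommGroup F] [InnerProductSpace ℝ F],
        ∀ (x : F) (f : F → EReal), MemClassF f (n - 1) x → MemClassF f n x) ∧
      MemClassF (gEx18 n) n 0 ∧ ¬ MemClassF (gEx18 n) (n - 1) 0 := by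
  obtain ⟨k, rfl⟩ : ∃ k, n = k + 2 := ⟨n - 2, by omega⟩
  exact ⟨fun _ _ _ _ _ hf => hf.succ, memClassF_gEx18 (by omega), not_memClassF_gEx18 k⟩
end

section
/- Let f : E → ℝ be a function and x̄ ∈ E such that the directional derivative f′(x̄;u) = lim_{t↓0} t⁻¹[f(x̄+tu)−f(x̄)] and the Ben-Tal–Zowe second-order derivative f″_{BZ}(x̄;u,z) = lim_{t↓0} t⁻²[f(x̄+tu+t²z)−f(x̄)−t f′(x̄;u)] exist for all u, z ∈ E. If 0 ∈ ∂₋¹f(x̄) and 0 ∈ ∂₋²f(x̄;0) (the first- and second-order lower Hadamard necessary conditions hold at x̄), then f′(x̄;u) ≥ 0 for all u ∈ E, and whenever f′(x̄;u) = 0 one has f″_{BZ}(x̄;u,z) ≥ 0 for all z ∈ E. -/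
open Filter Topology

/- The Hadamard derivative is a liminf over pairs `(t, u') → (0⁺, u)`; bounding it along the curve
`t ↦ (t, u)` gives the first-order condition, and along `t ↦ (t, u + t z)`, for which
`x + t (u + t z) = x + t u + t² z`, it gives twice the Ben-Tal–Zowe quotient, whose `f'`-term
vanishes when `f' (x; u) = 0`. -/

section HadamardQuotient

variable {E : Type*} [NormedAddCommGroup E] [InnerProductSpace ℝ E]

noncomputable def hadamardQuotient (f : E → EReal) (x : E) (k : ℕ) (xs : FormTuple E k)
    (t : ℝ) (v : E) : EReal :=
  (((Nat.factorial (k + 1) : ℝ) / t ^ (k + 1) : ℝ) : EReal) *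
    (f (x + t • v) - f x -
      ((∑ i : Fin k, t ^ (i.1 + 1) / (Nat.factorial (i.1 + 1)) * xs i (fun _ => v) : ℝ) : EReal))

theorem hadamardDeriv_eq_liminf (f : E → EReal) (x : E) (k : ℕ) (xs : FormTuple E k) (u : E) :
    hadamardDeriv f x k xs u =
      liminf (fun p : ℝ × E => hadamardQuotient f x k xs p.1 p.2) (𝓝[>] 0 ×ˢ 𝓝 u) :=
  rfl

theorem hadamardDeriv_le_of_tendsto (f : E → EReal) (x : E) (k : ℕ) (xs : FormTuple E k)
    {u : E} {γ : ℝ → E} (hγ : Tendsto γ (𝓝[>] 0) (𝓝 u)) {L : EReal}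
    (hL : Tendsto (fun t => hadamardQuotient f x k xs t (γ t)) (𝓝[>] 0) (𝓝 L)) :
    hadamardDeriv f x k xs u ≤ L := by
  have hcurve : Tendsto (fun t => (t, γ t)) (𝓝[>] (0 : ℝ)) (𝓝[>] 0 ×ˢ 𝓝 u) :=
    tendsto_id.prodMk hγ
  rw [hadamardDeriv_eq_liminf, ← hL.liminf_eq]
  exact hcurve.liminf_le_liminf_comp

theorem hadamardQuotient_zero (f : E → ℝ) (x : E) (xs : FormTuple E 0) (t : ℝ) (v : E) :
    hadamardQuotient (fun y => (f y : EReal)) x 0 xs t v =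
      ((t⁻¹ * (f (x + t • v) - f x) : ℝ) : EReal) := by
  simp [hadamardQuotient, ← EReal.coe_sub, ← EReal.coe_mul, one_div]

theorem hadamardQuotient_one_zero (f : E → ℝ) (x : E) (t : ℝ) (v : E) :
    hadamardQuotient (fun y => (f y : EReal)) x 1 (fun _ => 0) t v =
      ((2 * ((t ^ 2)⁻¹ * (f (x + t • v) - f x)) : ℝ) : EReal) := by
  simp only [hadamardQuotient, zero_apply, mul_zero,
    Finset.sum_const_zero, EReal.coe_zero, sub_zero, ← EReal.coe_sub, ← EReal.coe_mul]
  norm_num [div_eq_mul_inv, mul_assoc]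

theorem hadamardDeriv_zero_le_of_tendsto (f : E → ℝ) (x : E) (xs : FormTuple E 0) {u : E}
    {L : ℝ} (hL : Tendsto (fun t : ℝ => t⁻¹ * (f (x + t • u) - f x)) (𝓝[>] 0) (𝓝 L)) :
    hadamardDeriv (fun y => (f y : EReal)) x 0 xs u ≤ L := by
  refine hadamardDeriv_le_of_tendsto _ x 0 xs tendsto_const_nhds ?_
  simp only [hadamardQuotient_zero]
  exact (continuous_coe_real_ereal.tendsto L).comp hL

theorem hadamardDeriv_one_zero_le_of_tendsto (f : E → ℝ) (x : E) {u z : E} {L : ℝ}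
    (hL : Tendsto (fun t : ℝ => (t ^ 2)⁻¹ * (f (x + t • u + t ^ 2 • z) - f x)) (𝓝[>] 0) (𝓝 L)) :
    hadamardDeriv (fun y => (f y : EReal)) x 1 (fun _ => 0) u ≤ ((2 * L : ℝ) : EReal) := by
  have hγ : Tendsto (fun t : ℝ => u + t • z) (𝓝[>] 0) (𝓝 u) := by
    have : Continuous fun t : ℝ => u + t • z := by fun_prop
    simpa using (this.tendsto 0).mono_left nhdsWithin_le_nhds
  refine hadamardDeriv_le_of_tendsto _ x 1 _ hγ ?_
  have hpoint (t : ℝ) : x + t • (u + t • z) = x + t • u + t ^ 2 • z := by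
    rw [smul_add, smul_smul, ← add_assoc, sq]
  simp only [hadamardQuotient_one_zero, hpoint]
  exact (continuous_coe_real_ereal.tendsto _).comp (hL.const_mul 2)

end HadamardQuotient

theorem stmt_19_general {E : Type*} [NormedAddCommGroup E] [InnerProductSpace ℝ E]
    (f : E → ℝ) (xbar : E)
    (f' : E → ℝ) (f'' : E → E → ℝ)
    (hf' : ∀ u : E, Tendsto (fun t : ℝ => t⁻¹ * (f (xbar + t • u) - f xbar))
      (𝓝[>] (0 : ℝ)) (𝓝 (f' u)))
    (hf'' : ∀ u z : E, Tendsto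
      (fun t : ℝ => (t ^ 2)⁻¹ * (f (xbar + t • u + (t ^ 2) • z) - f xbar - t * f' u))
      (𝓝[>] (0 : ℝ)) (𝓝 (f'' u z)))
    (h1 : (0 : MForm E 1) ∈
      hadamardSubdiff (fun y => ((f y : ℝ) : EReal)) xbar 0 (fun _ => 0))
    (h2 : (0 : MForm E 2) ∈
      hadamardSubdiff (fun y => ((f y : ℝ) : EReal)) xbar 1 (fun _ => 0)) :
    (∀ u : E, 0 ≤ f' u) ∧ ∀ u : E, f' u = 0 → ∀ z : E, 0 ≤ f'' u z := by
  refine ⟨fun u => ?_, fun u hu z => ?_⟩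
  · have h := (h1 u).trans (hadamardDeriv_zero_le_of_tendsto f xbar _ (hf' u))
    rwa [zero_apply, EReal.coe_le_coe_iff] at h
  · have hBZ := hf'' u z
    simp only [hu, mul_zero, sub_zero] at hBZ
    have h := (h2 u).trans (hadamardDeriv_one_zero_le_of_tendsto f xbar hBZ)
    rw [zero_apply, EReal.coe_le_coe_iff] at h
    linarith

/-- if the directional derivative `f'` and the Ben-Tal–Zowe second-order
derivative `f''` of `f` at `xbar` exist in all directions, and the first- and second-order
lower Hadamard necessary conditions `0 ∈ ∂₋¹ f xbar`, `0 ∈ ∂₋² f (xbar; 0)` hold, then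
`f' (xbar; u) ≥ 0` for all `u`, and `f''_BZ (xbar; u, z) ≥ 0` for all `z` whenever
`f' (xbar; u) = 0`. -/
theorem stmt_19 {E : Type*} [NormedAddCommGroup E] [InnerProductSpace ℝ E]
    [FiniteDimensional ℝ E] (f : E → ℝ) (xbar : E)
    (f' : E → ℝ) (f'' : E → E → ℝ)
    (hf' : ∀ u : E, Tendsto (fun t : ℝ => t⁻¹ * (f (xbar + t • u) - f xbar))
      (𝓝[>] (0 : ℝ)) (𝓝 (f' u)))
    (hf'' : ∀ u z : E, Tendsto
      (fun t : ℝ => (t ^ 2)⁻¹ * (f (xbar + t • u + (t ^ 2) • z) - f xbar - t * f' u))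
      (𝓝[>] (0 : ℝ)) (𝓝 (f'' u z)))
    (h1 : (0 : MForm E 1) ∈
      hadamardSubdiff (fun y => ((f y : ℝ) : EReal)) xbar 0 (fun _ => 0))
    (h2 : (0 : MForm E 2) ∈
      hadamardSubdiff (fun y => ((f y : ℝ) : EReal)) xbar 1 (fun _ => 0)) :
    (∀ u : E, 0 ≤ f' u) ∧ ∀ u : E, f' u = 0 → ∀ z : E, 0 ≤ f'' u z :=
  stmt_19_general f xbar f' f'' hf' hf'' h1 h2
end
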